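/- arXiv:1305.6693 — 7 statements merged into one kernel-verified Lean document; each statement's English description precedes it below -/
import Mathlib

section
/- If a, b ∈ ℤ² are lattice points such that the triangle with vertices 0, a, b contains no lattice point other than its three vertices, then the area of this triangle equals 1/2, i.e., |det(a,b)| = 1. -/
/-!
Write a lattice point as `s • a + t • b` with real `s, t`. Subtracting `⌊s⌋ • a + ⌊t⌋ • b`
moves it into the half-open parallelogram spanned by `a` and `b`, which is covered by the
triangle `0, a, b` and its image under `p ↦ a + b - p`. Both triangles contain no lattice
points besides their vertices, so `s` and `t` are integers. Thus `a, b` is a basis of `ℤ²`,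
and the integral change of basis to the standard basis shows `det (a, b) = ±1`.
-/

section EmptyTriangle

variable {E : Type*} [AddCommGroup E] [Module ℝ E]

theorem smul_add_smul_mem_convexHull_zero {x y : E} {u v : ℝ} (hu : 0 ≤ u) (hv : 0 ≤ v)
    (huv : u + v ≤ 1) : u • x + v • y ∈ convexHull ℝ ({0, x, y} : Set E) := by
  have := (convex_convexHull ℝ ({0, x, y} : Set E)).sum_mem (t := Finset.univ)
    (w := ![1 - u - v, u, v]) (z := ![0, x, y])
    (fun i _ => by fin_cases i <;> simp [hu, hv]; linarith)
    (by simp [Fin.sum_univ_three]; ring)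
    (fun i _ => subset_convexHull ℝ _ (by fin_cases i <;> simp))
  simpa [Fin.sum_univ_three] using this

def AddSubgroup.IsEmptyTriangle (Λ : AddSubgroup E) (x y : E) : Prop :=
  ∀ z ∈ Λ, z ∈ convexHull ℝ {0, x, y} → z = 0 ∨ z = x ∨ z = y

namespace AddSubgroup.IsEmptyTriangle

variable {Λ : AddSubgroup E} {x y : E}

theorem coeffs_eq_vertex (hΛ : Λ.IsEmptyTriangle x y) (hxy : LinearIndependent ℝ ![x, y])
    {u v : ℝ} (hu : 0 ≤ u) (hv : 0 ≤ v) (huv : u + v ≤ 1) (hmem : u • x + v • y ∈ Λ) :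
    (u = 0 ∧ v = 0) ∨ (u = 1 ∧ v = 0) ∨ (u = 0 ∧ v = 1) := by
  rcases hΛ _ hmem (smul_add_smul_mem_convexHull_zero hu hv huv) with h | h | h
  · exact .inl (hxy.eq_zero_of_pair h)
  · exact .inr (.inl (hxy.eq_of_pair (s' := 1) (t' := 0) (by simpa using h)))
  · exact .inr (.inr (hxy.eq_of_pair (s' := 0) (t' := 1) (by simpa using h)))

theorem coeffs_eq_zero_of_lt_one (hΛ : Λ.IsEmptyTriangle x y)
    (hxy : LinearIndependent ℝ ![x, y]) (hx : x ∈ Λ) (hy : y ∈ Λ) {u v : ℝ}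
    (hu₀ : 0 ≤ u) (hu₁ : u < 1) (hv₀ : 0 ≤ v) (hv₁ : v < 1) (hmem : u • x + v • y ∈ Λ) :
    u = 0 ∧ v = 0 := by
  rcases le_or_gt (u + v) 1 with huv | huv
  · rcases hΛ.coeffs_eq_vertex hxy hu₀ hv₀ huv hmem with h | h | h
    · exact h
    · linarith [h.1]
    · linarith [h.2]
  · have hmem' : (1 - u) • x + (1 - v) • y ∈ Λ := by
      have : (1 - u) • x + (1 - v) • y = x + y - (u • x + v • y) := by
        simp only [sub_smul, one_smul]; abel
      rw [this]
      exact Λ.sub_mem (Λ.add_mem hx hy) hmem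
    rcases hΛ.coeffs_eq_vertex hxy (by linarith) (by linarith) (by linarith) hmem' with
      h | h | h <;> linarith [h.1, h.2]

theorem exists_zsmul_add_zsmul_eq (hΛ : Λ.IsEmptyTriangle x y)
    (hxy : LinearIndependent ℝ ![x, y]) (hx : x ∈ Λ) (hy : y ∈ Λ) {z : E} (hz : z ∈ Λ)
    {s t : ℝ} (hst : s • x + t • y = z) : ∃ m n : ℤ, m • x + n • y = z := by
  subst hst
  have hfract : Int.fract s • x + Int.fract t • y ∈ Λ := by
    have : Int.fract s • x + Int.fract t • y = s • x + t • y - (⌊s⌋ • x + ⌊t⌋ • y) := by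
      simp only [Int.fract, sub_smul, ← Int.cast_smul_eq_zsmul ℝ]; abel
    rw [this]
    exact Λ.sub_mem hz (Λ.add_mem (Λ.zsmul_mem hx _) (Λ.zsmul_mem hy _))
  obtain ⟨hs, ht⟩ := hΛ.coeffs_eq_zero_of_lt_one hxy hx hy (Int.fract_nonneg s)
    (Int.fract_lt_one s) (Int.fract_nonneg t) (Int.fract_lt_one t) hfract
  rw [Int.fract, sub_eq_zero] at hs ht
  refine ⟨⌊s⌋, ⌊t⌋, ?_⟩
  rw [← Int.cast_smul_eq_zsmul ℝ, ← Int.cast_smul_eq_zsmul ℝ, ← hs, ← ht]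

end AddSubgroup.IsEmptyTriangle

end EmptyTriangle

section Plane

theorem linearIndependent_pair_of_det_ne_zero {x y : ℝ × ℝ} (h : x.1 * y.2 - x.2 * y.1 ≠ 0) :
    LinearIndependent ℝ ![x, y] := by
  refine LinearIndependent.pair_iff.mpr fun s t hst => ?_
  have h₁ : s * x.1 + t * y.1 = 0 := by simpa using congrArg Prod.fst hst
  have h₂ : s * x.2 + t * y.2 = 0 := by simpa using congrArg Prod.snd hst
  constructor
  · exact (mul_eq_zero.mp (by linear_combination y.2 * h₁ - y.1 * h₂)).resolve_right h
  · exact (mul_eq_zero.mp (by linear_combination x.1 * h₂ - x.2 * h₁)).resolve_right h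

theorem exists_smul_add_smul_eq_of_det_ne_zero {x y : ℝ × ℝ} (h : x.1 * y.2 - x.2 * y.1 ≠ 0)
    (z : ℝ × ℝ) : ∃ s t : ℝ, s • x + t • y = z := by
  refine ⟨(z.1 * y.2 - z.2 * y.1) / (x.1 * y.2 - x.2 * y.1),
    (x.1 * z.2 - x.2 * z.1) / (x.1 * y.2 - x.2 * y.1), ?_⟩
  ext <;> simp only [Prod.fst_add, Prod.snd_add, Prod.smul_fst, Prod.smul_snd, smul_eq_mul] <;>
    rw [div_mul_eq_mul_div, div_mul_eq_mul_div, ← add_div, div_eq_iff h] <;> ring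

theorem Int.abs_det_eq_one_of_zsmul_add_zsmul {a b : ℤ × ℤ} {m₁ n₁ m₂ n₂ : ℤ}
    (h₁ : m₁ • a + n₁ • b = (1, 0)) (h₂ : m₂ • a + n₂ • b = (0, 1)) :
    |a.1 * b.2 - a.2 * b.1| = 1 := by
  have e₁ : m₁ * a.1 + n₁ * b.1 = 1 := by simpa using congrArg Prod.fst h₁
  have e₂ : m₁ * a.2 + n₁ * b.2 = 0 := by simpa using congrArg Prod.snd h₁
  have e₃ : m₂ * a.1 + n₂ * b.1 = 0 := by simpa using congrArg Prod.fst h₂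
  have e₄ : m₂ * a.2 + n₂ * b.2 = 1 := by simpa using congrArg Prod.snd h₂
  refine Int.isUnit_iff_abs_eq.mp (IsUnit.of_mul_eq_one (m₁ * n₂ - m₂ * n₁) ?_)
  -- multiplicativity of `det`: `det (a, b) * det (m, n) = det ((1, 0), (0, 1))`
  linear_combination (m₂ * a.2 + n₂ * b.2) * e₁ + e₄ - (m₂ * a.1 + n₂ * b.1) * e₂

end Plane

/-- If the (nondegenerate) triangle with vertices `0`, `a`, `b` (lattice points)
contains no lattice point other than its three vertices, then its area is `1/2`,
i.e. `|det(a, b)| = 1`. -/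
theorem det_eq_one_of_no_interior_lattice_point (a b : ℤ × ℤ)
    (hnd : a.1 * b.2 - a.2 * b.1 ≠ 0)
    (hempty : ∀ p : ℤ × ℤ,
      ((p.1 : ℝ), (p.2 : ℝ)) ∈
        convexHull ℝ ({((0 : ℝ), (0 : ℝ)), ((a.1 : ℝ), (a.2 : ℝ)),
          ((b.1 : ℝ), (b.2 : ℝ))} : Set (ℝ × ℝ)) →
      p = (0, 0) ∨ p = a ∨ p = b) :
    |a.1 * b.2 - a.2 * b.1| = 1 := by
  let ι : ℤ × ℤ →+ ℝ × ℝ := (Int.castAddHom ℝ).prodMap (Int.castAddHom ℝ)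
  have hι : Function.Injective ι :=
    Prod.map_injective.mpr ⟨Int.cast_injective, Int.cast_injective⟩
  have hdet : (ι a).1 * (ι b).2 - (ι a).2 * (ι b).1 ≠ 0 := by
    simpa [ι] using (Int.cast_ne_zero (α := ℝ)).mpr hnd
  have hΛ : ι.range.IsEmptyTriangle (ι a) (ι b) := by
    rintro _ ⟨p, rfl⟩ hp
    rcases hempty p hp with rfl | rfl | rfl
    exacts [.inl (map_zero ι), .inr (.inl rfl), .inr (.inr rfl)]
  have hbasis (p : ℤ × ℤ) : ∃ m n : ℤ, m • a + n • b = p := by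
    obtain ⟨s, t, hst⟩ := exists_smul_add_smul_eq_of_det_ne_zero hdet (ι p)
    obtain ⟨m, n, hmn⟩ := hΛ.exists_zsmul_add_zsmul_eq
      (linearIndependent_pair_of_det_ne_zero hdet) ⟨a, rfl⟩ ⟨b, rfl⟩ ⟨p, rfl⟩ hst
    exact ⟨m, n, hι (by rw [map_add, map_zsmul, map_zsmul, hmn])⟩
  obtain ⟨m₁, n₁, h₁⟩ := hbasis (1, 0)
  obtain ⟨m₂, n₂, h₂⟩ := hbasis (0, 1)
  exact Int.abs_det_eq_one_of_zsmul_add_zsmul h₁ h₂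
end

section
/- Conversely, if a, b ∈ ℤ² satisfy |det(a,b)| = 1, then the triangle with vertices 0, a, b contains no lattice points other than its vertices. -/
/-- If lattice points `a, b` satisfy `|det(a, b)| = 1`, then the triangle with
vertices `0`, `a`, `b` contains no lattice point other than its vertices. -/
theorem no_lattice_point_of_det_eq_one (a b : ℤ × ℤ)
    (hdet : |a.1 * b.2 - a.2 * b.1| = 1) :
    ∀ p : ℤ × ℤ,
      ((p.1 : ℝ), (p.2 : ℝ)) ∈
        convexHull ℝ ({((0 : ℝ), (0 : ℝ)), ((a.1 : ℝ), (a.2 : ℝ)),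
          ((b.1 : ℝ), (b.2 : ℝ))} : Set (ℝ × ℝ)) →
      p = (0, 0) ∨ p = a ∨ p = b := by
  intro p hp
  rw [convexHull_insert ⟨_, Set.mem_insert _ _⟩, convexHull_pair, mem_convexJoin] at hp
  obtain ⟨x, hx, q, hq, hpq⟩ := hp
  rw [Set.mem_singleton_iff] at hx
  subst hx
  obtain ⟨u, v, hu, hv, huv, rfl⟩ := hq
  obtain ⟨s, t, hs, ht, hst, hpq⟩ := hpq
  have h1 := congrArg Prod.fst hpq
  have h2 := congrArg Prod.snd hpq
  simp [Prod.smul_mk, mul_add] at h1 h2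
  set β := t * u with hβ
  set γ := t * v with hγ
  have hβ0 : 0 ≤ β := mul_nonneg ht hu
  have hγ0 : 0 ≤ γ := mul_nonneg ht hv
  have hsum : β + γ ≤ 1 := by
    have : β + γ = t := by rw [hβ, hγ, ← mul_add, huv, mul_one]
    linarith
  have e1 : (p.1 : ℝ) = β * a.1 + γ * b.1 := by rw [hβ, hγ]; linarith [h1]
  have e2 : (p.2 : ℝ) = β * a.2 + γ * b.2 := by rw [hβ, hγ]; linarith [h2]
  -- determinant relations
  have hD : a.1 * b.2 - a.2 * b.1 = 1 ∨ a.1 * b.2 - a.2 * b.1 = -1 := abs_eq (by norm_num) |>.mp hdet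
  have hm : ((p.1 * b.2 - p.2 * b.1 : ℤ) : ℝ) = β * (a.1 * b.2 - a.2 * b.1 : ℤ) := by
    push_cast; rw [e1, e2]; ring
  have hn : ((a.1 * p.2 - a.2 * p.1 : ℤ) : ℝ) = γ * (a.1 * b.2 - a.2 * b.1 : ℤ) := by
    push_cast; rw [e1, e2]; ring
  rcases hD with hD | hD <;>
  · rw [hD] at hm hn
    push_cast at hm hn
    first
    | (have hβval : β = (p.1 * b.2 - p.2 * b.1 : ℤ) := by push_cast; linarith
       have hγval : γ = (a.1 * p.2 - a.2 * p.1 : ℤ) := by push_cast; linarith)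
    | (have hβval : β = (-(p.1 * b.2 - p.2 * b.1) : ℤ) := by push_cast; linarith
       have hγval : γ = (-(a.1 * p.2 - a.2 * p.1) : ℤ) := by push_cast; linarith)
    clear hm hn
    obtain ⟨m, hmval⟩ : ∃ m : ℤ, β = (m : ℝ) := ⟨_, hβval⟩
    obtain ⟨n, hnval⟩ : ∃ n : ℤ, γ = (n : ℝ) := ⟨_, hγval⟩
    rw [hmval] at hβ0 e1 e2 hsum
    rw [hnval] at hγ0 e1 e2 hsum
    have hm0 : 0 ≤ m := by exact_mod_cast hβ0
    have hn0 : 0 ≤ n := by exact_mod_cast hγ0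
    have hmn : m + n ≤ 1 := by exact_mod_cast hsum
    have hcases : (m = 0 ∧ n = 0) ∨ (m = 1 ∧ n = 0) ∨ (m = 0 ∧ n = 1) := by omega
    rcases hcases with ⟨rfl, rfl⟩ | ⟨rfl, rfl⟩ | ⟨rfl, rfl⟩
    · left
      simp only [Int.cast_zero, zero_mul, add_zero, zero_add] at e1 e2
      exact Prod.ext (by exact_mod_cast e1) (by exact_mod_cast e2)
    · right; left
      simp only [Int.cast_zero, Int.cast_one, zero_mul, one_mul, add_zero, zero_add] at e1 e2
      exact Prod.ext (by exact_mod_cast e1) (by exact_mod_cast e2)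
    · right; right
      simp only [Int.cast_zero, Int.cast_one, zero_mul, one_mul, add_zero, zero_add] at e1 e2
      exact Prod.ext (by exact_mod_cast e1) (by exact_mod_cast e2)
end

section
/- Let a₁, a₂, a₃, a₄ ∈ ℤ² be such that det(a₁,a₂) = 1, det(aᵢ,aⱼ) ≥ 1 for all i ∈ {1,2}, j ∈ {3,4}. Let λ ∈ (0,1/2), q₁ = (1−λ)a₂ + λa₁, and q₃ = q₁ + ((1−λ)a₁ + λa₂) + ((1−λ)a₄ + λa₃). Then det(q₁, q₃) ≥ 2λ > 0; in particular q₃ lies strictly to the left of the directed line from the origin through q₁. -/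
/-- Let `a₁, a₂, a₃, a₄ ∈ ℤ²` with `det(a₁,a₂) = 1` and `det(aᵢ,aⱼ) ≥ 1` for
`i ∈ {1,2}`, `j ∈ {3,4}`. For `λ ∈ (0,1/2)`, `q₁ = (1−λ)a₂ + λa₁` and
`q₃ = q₁ + ((1−λ)a₁ + λa₂) + ((1−λ)a₄ + λa₃)`, one has
`det(q₁, q₃) ≥ 2λ > 0`: `q₃` is strictly to the left of the directed line
from the origin through `q₁`. -/
theorem det_q1_q3_ge (a₁ a₂ a₃ a₄ : ℤ × ℤ)
    (h12 : a₁.1 * a₂.2 - a₁.2 * a₂.1 = 1)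
    (h13 : 1 ≤ a₁.1 * a₃.2 - a₁.2 * a₃.1)
    (h14 : 1 ≤ a₁.1 * a₄.2 - a₁.2 * a₄.1)
    (h23 : 1 ≤ a₂.1 * a₃.2 - a₂.2 * a₃.1)
    (h24 : 1 ≤ a₂.1 * a₄.2 - a₂.2 * a₄.1)
    (l : ℝ) (hl0 : 0 < l) (hl : l < 1 / 2)
    (q₁ q₃ : ℝ × ℝ)
    (hq₁ : q₁ = (1 - l) • ((a₂.1 : ℝ), (a₂.2 : ℝ)) + l • ((a₁.1 : ℝ), (a₁.2 : ℝ)))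
    (hq₃ : q₃ = q₁ + ((1 - l) • ((a₁.1 : ℝ), (a₁.2 : ℝ)) + l • ((a₂.1 : ℝ), (a₂.2 : ℝ)))
      + ((1 - l) • ((a₄.1 : ℝ), (a₄.2 : ℝ)) + l • ((a₃.1 : ℝ), (a₃.2 : ℝ)))) :
    2 * l ≤ q₁.1 * q₃.2 - q₁.2 * q₃.1 ∧ 0 < 2 * l := by
  have c12 : ((a₁.1:ℝ) * a₂.2 - a₁.2 * a₂.1) = 1 := by exact_mod_cast congrArg (Int.cast : ℤ → ℝ) h12
  have c13 : (1:ℝ) ≤ (a₁.1:ℝ) * a₃.2 - a₁.2 * a₃.1 := by exact_mod_cast h13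
  have c14 : (1:ℝ) ≤ (a₁.1:ℝ) * a₄.2 - a₁.2 * a₄.1 := by exact_mod_cast h14
  have c23 : (1:ℝ) ≤ (a₂.1:ℝ) * a₃.2 - a₂.2 * a₃.1 := by exact_mod_cast h23
  have c24 : (1:ℝ) ≤ (a₂.1:ℝ) * a₄.2 - a₂.2 * a₄.1 := by exact_mod_cast h24
  subst hq₁ hq₃
  constructor
  · simp only [Prod.fst_add, Prod.snd_add, Prod.smul_mk, smul_eq_mul]
    nlinarith [mul_pos hl0 (by linarith : (0:ℝ) < 1 - l), sq_nonneg l, sq_nonneg (1-l),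
      mul_le_mul_of_nonneg_left c13 (le_of_lt (mul_pos hl0 hl0)),
      mul_le_mul_of_nonneg_left c24 (le_of_lt (mul_pos (by linarith : (0:ℝ) < 1-l) (by linarith : (0:ℝ) < 1-l))),
      mul_le_mul_of_nonneg_left c14 (le_of_lt (mul_pos hl0 (by linarith : (0:ℝ) < 1-l))),
      mul_le_mul_of_nonneg_left c23 (le_of_lt (mul_pos hl0 (by linarith : (0:ℝ) < 1-l)))]
  · linarith
end

section
/- Let V = [v₁, …, v_{2t}] be a finite sequence of nonzero vectors in ℝ², sorted strictly counterclockwise by angle around the origin (det(vᵢ, vⱼ) > 0 whenever the angular order goes counterclockwise from vᵢ to vⱼ), and such that for each vector v in V, −v is also in V. Then the partial-sum points p₁ = v₁, pᵢ = p_{i−1} + vᵢ form a set of points in convex position (they are the vertices of a convex polygon). -/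
set_option maxHeartbeats 2000000 in
/-- If `V = [v₀, …, v_{2t−1}]` is a symmetric sequence of nonzero vectors in `ℝ²`
(sorted strictly counterclockwise: `det(vᵢ,vⱼ) > 0` when `j` follows `i` within
half a turn; and `v_{i+t} = −v_i`), then the partial-sum points are in convex
position: each one is a vertex of the convex hull of all of them. -/
theorem partial_sums_in_convex_position (t : ℕ) (ht : 1 ≤ t) (v : ℕ → ℝ × ℝ)
    (hper : ∀ i, v (i + 2 * t) = v i)
    (hnz : ∀ i, v i ≠ 0)
    (hsym : ∀ i, v (i + t) = -v i)
    (hsort : ∀ i j, i < j → j < i + t →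
      0 < (v i).1 * (v j).2 - (v i).2 * (v j).1) :
    ∀ i < 2 * t,
      (∑ k ∈ Finset.range (i + 1), v k) ∉
        convexHull ℝ
          {p : ℝ × ℝ | ∃ j < 2 * t, j ≠ i ∧ p = ∑ k ∈ Finset.range (j + 1), v k} := by
  intro i hi hmem
  -- the separating direction
  set w : ℝ × ℝ := if t = 1 then (-(v i).2, (v i).1) else v i + v (i + 1) with hwdef
  -- the linear functional `x ↦ det(x, w)`
  set F : (ℝ × ℝ) →ₗ[ℝ] ℝ :=
    { toFun := fun x => x.1 * w.2 - x.2 * w.1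
      map_add' := by intro a b; simp [Prod.fst_add, Prod.snd_add]; ring
      map_smul' := by intro c a; simp [Prod.smul_fst, Prod.smul_snd]; ring } with hFdef
  set d : ℕ → ℝ := fun k => F (v k) with hddef
  have hFeval : ∀ x : ℝ × ℝ, F x = x.1 * w.2 - x.2 * w.1 := fun x => rfl
  -- positivity of `det(x, rot x)` for nonzero x
  have hrot : ∀ k, 0 < (v k).1 * (v k).1 + (v k).2 * (v k).2 := by
    intro k
    have h := hnz k
    rcases eq_or_ne (v k).1 0 with h1 | h1
    · rcases eq_or_ne (v k).2 0 with h2 | h2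
      · exact absurd (Prod.ext h1 h2) h
      · nlinarith [mul_self_nonneg (v k).1, mul_self_pos.mpr h2]
    · nlinarith [mul_self_pos.mpr h1, mul_self_nonneg (v k).2]
  -- Claim A : d k > 0 for k ≤ i < k + t
  have hA : ∀ k, k ≤ i → i < k + t → 0 < d k := by
    intro k hk1 hk2
    rcases eq_or_ne t 1 with ht1 | ht1
    · have hk : k = i := by omega
      have : d k = (v i).1 * (v i).1 + (v i).2 * (v i).2 := by
        simp only [hddef, hFeval, hk, hwdef, if_pos ht1]
        ring
      rw [this]; exact hrot i
    · have hw : w = v i + v (i + 1) := by rw [hwdef, if_neg ht1]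
      have hd : d k = ((v k).1 * (v i).2 - (v k).2 * (v i).1)
          + ((v k).1 * (v (i+1)).2 - (v k).2 * (v (i+1)).1) := by
        simp only [hddef, hFeval, hw, Prod.fst_add, Prod.snd_add]; ring
      rcases eq_or_lt_of_le hk1 with hk | hk
      · -- k = i
        subst hk
        have h2 : 0 < (v k).1 * (v (k+1)).2 - (v k).2 * (v (k+1)).1 :=
          hsort k (k+1) (by omega) (by omega)
        have h0 : (v k).1 * (v k).2 - (v k).2 * (v k).1 = 0 := by ring
        rw [hd]; linarith
      · -- k < i
        have h1 : 0 < (v k).1 * (v i).2 - (v k).2 * (v i).1 := hsort k i hk hk2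
        have h2 : 0 ≤ (v k).1 * (v (i+1)).2 - (v k).2 * (v (i+1)).1 := by
          rcases eq_or_lt_of_le (by omega : i + 1 ≤ k + t) with he | hlt
          · have hv : v (i+1) = -v k := by rw [he]; exact hsym k
            rw [hv]
            simp only [Prod.fst_neg, Prod.snd_neg]
            exact ge_of_eq (by ring)
          · exact le_of_lt (hsort k (i+1) (by omega) hlt)
        rw [hd]; linarith
  -- Claim B : d k < 0 for i < k ≤ i + t
  have hB : ∀ k, i < k → k ≤ i + t → d k < 0 := by
    intro k hk1 hk2
    rcases eq_or_ne t 1 with ht1 | ht1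
    · have hk : k = i + t := by omega
      have hv : v k = -v i := by rw [hk]; exact hsym i
      have : d k = -((v i).1 * (v i).1 + (v i).2 * (v i).2) := by
        simp only [hddef, hFeval, hv, hwdef, if_pos ht1, Prod.fst_neg, Prod.snd_neg]
        ring
      rw [this]; linarith [hrot i]
    · have hw : w = v i + v (i + 1) := by rw [hwdef, if_neg ht1]
      have hd : d k = ((v k).1 * (v i).2 - (v k).2 * (v i).1)
          + ((v k).1 * (v (i+1)).2 - (v k).2 * (v (i+1)).1) := by
        simp only [hddef, hFeval, hw, Prod.fst_add, Prod.snd_add]; ring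
      have h1 : (v k).1 * (v i).2 - (v k).2 * (v i).1 ≤ 0 := by
        rcases eq_or_lt_of_le hk2 with he | hlt
        · have hv : v k = -v i := by rw [he]; exact hsym i
          rw [hv]
          simp only [Prod.fst_neg, Prod.snd_neg]
          exact le_of_eq (by ring)
        · nlinarith [hsort i k hk1 hlt]
      have h2 : (v k).1 * (v (i+1)).2 - (v k).2 * (v (i+1)).1 ≤ 0 := by
        rcases eq_or_lt_of_le (by omega : i + 1 ≤ k) with he | hlt
        · rw [← he]; exact le_of_eq (by ring)
        · nlinarith [hsort (i+1) k hlt (by omega)]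
      -- at least one is strict
      rcases eq_or_lt_of_le (by omega : i + 1 ≤ k) with he | hlt
      · have h1' : (v k).1 * (v i).2 - (v k).2 * (v i).1 < 0 := by
          nlinarith [hsort i k hk1 (by omega : k < i + t)]
        rw [hd]; linarith
      · have h2' : (v k).1 * (v (i+1)).2 - (v k).2 * (v (i+1)).1 < 0 := by
          nlinarith [hsort (i+1) k hlt (by omega : k < i + 1 + t)]
        rw [hd]; linarith
  -- Claim A' : d k > 0 for i + t < k ≤ i + 2t
  have hA' : ∀ k, i + t < k → k ≤ i + 2 * t → 0 < d k := by
    intro k hk1 hk2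
    have hv : v k = -v (k - t) := by
      have := hsym (k - t)
      rwa [Nat.sub_add_cancel (by omega)] at this
    have hdk : d k = -d (k - t) := by
      simp only [hddef, hFeval, hv, Prod.fst_neg, Prod.snd_neg]; ring
    rw [hdk]
    have := hB (k - t) (by omega) (by omega)
    linarith
  -- sums over a full window vanish
  have hwin : ∀ a, ∑ m ∈ Finset.range (2 * t), d (a + m) = 0 := by
    intro a
    have h2t : 2 * t = t + t := by omega
    rw [h2t, Finset.sum_range_add]
    have : ∀ m ∈ Finset.range t, d (a + (t + m)) = -d (a + m) := by
      intro m _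
      have hv : v (a + (t + m)) = -v (a + m) := by
        have := hsym (a + m)
        rwa [show a + m + t = a + (t + m) by omega] at this
      simp only [hddef, hFeval, hv, Prod.fst_neg, Prod.snd_neg]; ring
    rw [Finset.sum_congr rfl this, Finset.sum_neg_distrib]
    ring
  -- F of the partial sums
  have hFp : ∀ j : ℕ, F (∑ k ∈ Finset.range (j + 1), v k) = ∑ k ∈ Finset.range (j + 1), d k := by
    intro j
    rw [map_sum]
  -- the key strict inequality
  have key : ∀ j, j < 2 * t → j ≠ i →
      ∑ k ∈ Finset.range (j + 1), d k < ∑ k ∈ Finset.range (i + 1), d k := by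
    intro j hj hji
    rcases lt_or_gt_of_ne hji with hlt | hgt
    · -- j < i
      rcases le_or_gt i (j + t) with hcase | hcase
      · -- short way around: sum over (j, i] is positive
        have hsplit : ∑ k ∈ Finset.range (i + 1), d k
            = (∑ k ∈ Finset.range (j + 1), d k) + ∑ m ∈ Finset.range (i - j), d (j + 1 + m) := by
          rw [show i + 1 = (j + 1) + (i - j) by omega, Finset.sum_range_add]
        have hpos : 0 < ∑ m ∈ Finset.range (i - j), d (j + 1 + m) := by
          apply Finset.sum_pos
          · intro m hm
            rw [Finset.mem_range] at hm
            exact hA (j + 1 + m) (by omega) (by omega)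
          · exact Finset.nonempty_range_iff.mpr (by omega)
        rw [hsplit]; linarith
      · -- long way around: use the window
        have hsplit : ∑ k ∈ Finset.range (j + 1), d k
            = (∑ k ∈ Finset.range (i + 1), d k) + ∑ m ∈ Finset.range (j + 2 * t - i), d (i + 1 + m) := by
          have h1 : ∑ k ∈ Finset.range (j + 1 + 2 * t), d k
              = (∑ k ∈ Finset.range (j + 1), d k) + ∑ m ∈ Finset.range (2 * t), d (j + 1 + m) := by
            rw [Finset.sum_range_add]
          rw [hwin (j + 1), add_zero] at h1
          rw [show j + 1 + 2 * t = (i + 1) + (j + 2 * t - i) by omega,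
            Finset.sum_range_add] at h1
          exact h1.symm
        have hneg : ∑ m ∈ Finset.range (j + 2 * t - i), d (i + 1 + m) < 0 := by
          apply Finset.sum_neg
          · intro m hm
            rw [Finset.mem_range] at hm
            exact hB (i + 1 + m) (by omega) (by omega)
          · exact Finset.nonempty_range_iff.mpr (by omega)
        rw [hsplit]; linarith
    · -- i < j
      rcases le_or_gt j (i + t) with hcase | hcase
      · have hsplit : ∑ k ∈ Finset.range (j + 1), d k
            = (∑ k ∈ Finset.range (i + 1), d k) + ∑ m ∈ Finset.range (j - i), d (i + 1 + m) := by
          rw [show j + 1 = (i + 1) + (j - i) by omega, Finset.sum_range_add]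
        have hneg : ∑ m ∈ Finset.range (j - i), d (i + 1 + m) < 0 := by
          apply Finset.sum_neg
          · intro m hm
            rw [Finset.mem_range] at hm
            exact hB (i + 1 + m) (by omega) (by omega)
          · exact Finset.nonempty_range_iff.mpr (by omega)
        rw [hsplit]; linarith
      · have hsplit : ∑ k ∈ Finset.range (i + 1), d k
            = (∑ k ∈ Finset.range (j + 1), d k) + ∑ m ∈ Finset.range (i + 2 * t - j), d (j + 1 + m) := by
          have h1 : ∑ k ∈ Finset.range (i + 1 + 2 * t), d k
              = (∑ k ∈ Finset.range (i + 1), d k) + ∑ m ∈ Finset.range (2 * t), d (i + 1 + m) := by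
            rw [Finset.sum_range_add]
          rw [hwin (i + 1), add_zero] at h1
          rw [show i + 1 + 2 * t = (j + 1) + (i + 2 * t - j) by omega,
            Finset.sum_range_add] at h1
          exact h1.symm
        have hpos : 0 < ∑ m ∈ Finset.range (i + 2 * t - j), d (j + 1 + m) := by
          apply Finset.sum_pos
          · intro m hm
            rw [Finset.mem_range] at hm
            exact hA' (j + 1 + m) (by omega) (by omega)
          · exact Finset.nonempty_range_iff.mpr (by omega)
        rw [hsplit]; linarith
  -- conclude via the halfspace
  have hsub : {p : ℝ × ℝ | ∃ j < 2 * t, j ≠ i ∧ p = ∑ k ∈ Finset.range (j + 1), v k}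
      ⊆ {x : ℝ × ℝ | F x < F (∑ k ∈ Finset.range (i + 1), v k)} := by
    rintro p ⟨j, hj, hji, rfl⟩
    show F _ < F _
    rw [hFp, hFp]
    exact key j hj hji
  have hconv : Convex ℝ {x : ℝ × ℝ | F x < F (∑ k ∈ Finset.range (i + 1), v k)} :=
    convex_halfSpace_lt F.isLinear _
  have hfin := convexHull_min hsub hconv hmem
  simp only [Set.mem_setOf_eq] at hfin
  exact lt_irrefl _ hfin
end

section
/- Let m ≥ 1 and for t = 0, 1, …, m² let b_t = (t/m, m − t/m) ∈ ℝ². Then the m² triangles Δ_t with vertices 0, b_{t−1}, b_t (t = 1,…,m²) each have area exactly 1/2, and they have pairwise disjoint interiors. -/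
private lemma half_convex (a c d : ℝ) :
    Convex ℝ {p : ℝ × ℝ | d ≤ a * p.1 + c * p.2} := by
  intro x hx y hy u v hu hv huv
  simp only [Set.mem_setOf_eq] at *
  simp only [Prod.fst_add, Prod.snd_add, Prod.smul_fst, Prod.smul_snd, smul_eq_mul]
  have hv' : v = 1 - u := by linarith
  subst hv'
  nlinarith [mul_le_mul_of_nonneg_left hx hu, mul_le_mul_of_nonneg_left hy hv]

private lemma interior_strict (a c d : ℝ) (hab : a ≠ 0 ∨ c ≠ 0)
    (S : Set (ℝ × ℝ)) (hS : ∀ q ∈ S, d ≤ a * q.1 + c * q.2)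
    (p : ℝ × ℝ) (hp : p ∈ interior S) : d < a * p.1 + c * p.2 := by
  rcases Metric.isOpen_iff.1 isOpen_interior p hp with ⟨ε, hε, hball⟩
  have hab2 : 0 < a ^ 2 + c ^ 2 := by
    rcases hab with h | h <;> positivity
  set δ : ℝ := ε / (2 * (|a| + |c| + 1)) with hδ
  have hδpos : 0 < δ := by positivity
  have hδeq : δ * (|a| + |c| + 1) = ε / 2 := by
    rw [hδ]; field_simp
  have hq : (p.1 - δ * a, p.2 - δ * c) ∈ S := by
    apply interior_subset
    apply hball
    rw [Metric.mem_ball, Prod.dist_eq]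
    apply max_lt
    · rw [Real.dist_eq]
      have : p.1 - δ * a - p.1 = -(δ * a) := by ring
      rw [this, abs_neg, abs_mul, abs_of_pos hδpos]
      nlinarith [abs_nonneg a, abs_nonneg c]
    · rw [Real.dist_eq]
      have : p.2 - δ * c - p.2 = -(δ * c) := by ring
      rw [this, abs_neg, abs_mul, abs_of_pos hδpos]
      nlinarith [abs_nonneg a, abs_nonneg c]
  have h := hS _ hq
  simp only at h
  nlinarith [mul_pos hδpos hab2]

private lemma key (m : ℕ) (hm : 1 ≤ m) (b : ℕ → ℝ × ℝ)
    (hb : ∀ t, b t = ((t : ℝ) / m, (m : ℝ) - t / m))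
    (Δ : ℕ → Set (ℝ × ℝ))
    (hΔ : ∀ t, Δ t = convexHull ℝ ({(0, 0), b (t - 1), b t} : Set (ℝ × ℝ)))
    (s t : ℕ) (hs : 1 ≤ s) (hst : s < t) :
    interior (Δ s) ∩ interior (Δ t) = ∅ := by
  have hM : (1:ℝ) ≤ m := by exact_mod_cast hm
  have hM0 : (0:ℝ) < m := by linarith
  have ht : 1 ≤ t := le_trans hs hst.le
  -- value of a linear functional on b u
  have hval : ∀ (a c : ℝ) (u : ℕ),
      a * (b u).1 + c * (b u).2 = (a * u + c * ((m:ℝ) * m - u)) / m := by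
    intro a c u
    rw [hb u]
    field_simp
  -- generic subset lemma
  have hsub : ∀ (a c : ℝ) (u : ℕ), 1 ≤ u →
      0 ≤ a * ((u:ℝ) - 1) + c * ((m:ℝ) * m - ((u:ℝ) - 1)) →
      0 ≤ a * (u:ℝ) + c * ((m:ℝ) * m - (u:ℝ)) →
      ∀ p ∈ Δ u, 0 ≤ a * p.1 + c * p.2 := by
    intro a c u hu h1 h2 p hp
    rw [hΔ u] at hp
    have hcast : ((u - 1 : ℕ) : ℝ) = (u:ℝ) - 1 := by
      rw [Nat.cast_sub hu, Nat.cast_one]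
    have : Δ u ⊆ {p : ℝ × ℝ | 0 ≤ a * p.1 + c * p.2} := by
      rw [hΔ u]
      apply convexHull_min _ (half_convex a c 0)
      rintro q hq
      simp only [Set.mem_insert_iff, Set.mem_singleton_iff] at hq
      rcases hq with rfl | rfl | rfl
      · simp
      · simp only [Set.mem_setOf_eq, hval, hcast]
        exact div_nonneg h1 hM0.le
      · simp only [Set.mem_setOf_eq, hval]
        exact div_nonneg h2 hM0.le
    exact this (by rw [hΔ u]; exact hp)
  have hS1 : (1:ℝ) ≤ (s:ℝ) := by exact_mod_cast hs
  have hT1 : (1:ℝ) ≤ (t:ℝ) := by exact_mod_cast ht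
  set S : ℝ := (s:ℝ)
  set T : ℝ := (t:ℝ)
  have hST : S + 1 ≤ T := by
    have : (s:ℝ) + 1 ≤ (t:ℝ) := by exact_mod_cast hst
    simpa using this
  -- halfspace containments
  have hBs : ∀ p ∈ Δ s, 0 ≤ (S - (m:ℝ)*m) * p.1 + S * p.2 := by
    apply hsub _ _ _ hs <;> nlinarith
  have hAt : ∀ p ∈ Δ t, 0 ≤ ((m:ℝ)*m - (T - 1)) * p.1 + (-(T - 1)) * p.2 := by
    apply hsub _ _ _ ht <;> nlinarith
  have hCs : ∀ p ∈ Δ s, 0 ≤ (1:ℝ) * p.1 + 1 * p.2 := by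
    apply hsub _ _ _ hs <;> nlinarith
  ext p
  simp only [Set.mem_inter_iff, Set.mem_empty_iff_false, iff_false, not_and]
  intro hp1 hp2
  have h1 : (0:ℝ) < (S - (m:ℝ)*m) * p.1 + S * p.2 :=
    interior_strict _ _ 0 (Or.inr (by linarith)) _ hBs p hp1
  have h2 : (0:ℝ) < ((m:ℝ)*m - (T - 1)) * p.1 + (-(T - 1)) * p.2 := by
    refine interior_strict _ _ 0 ?_ _ hAt p hp2
    by_cases hT : T - 1 = 0
    · left; rw [hT]; nlinarith
    · right; intro h; exact hT (by linarith [neg_eq_zero.mp h])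
  have h3 : 0 ≤ (1:ℝ) * p.1 + 1 * p.2 := hCs p (interior_subset hp1)
  have hint : 0 ≤ (T - 1 - S) * (p.1 + p.2) := by
    apply mul_nonneg (by linarith)
    linarith
  nlinarith

/-- For `m ≥ 1` and `b_t = (t/m, m − t/m)`, the `m²` triangles
`Δ_t = conv{0, b_{t−1}, b_t}` (`t = 1,…,m²`) each have area `1/2` and have
pairwise disjoint interiors. -/
theorem bucket_triangles (m : ℕ) (hm : 1 ≤ m)
    (b : ℕ → ℝ × ℝ) (hb : ∀ t, b t = ((t : ℝ) / m, (m : ℝ) - t / m))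
    (Δ : ℕ → Set (ℝ × ℝ))
    (hΔ : ∀ t, Δ t = convexHull ℝ ({(0, 0), b (t - 1), b t} : Set (ℝ × ℝ))) :
    (∀ t, 1 ≤ t → t ≤ m ^ 2 →
      |(b (t - 1)).1 * (b t).2 - (b (t - 1)).2 * (b t).1| / 2 = 1 / 2) ∧
    (∀ s t, 1 ≤ s → s ≤ m ^ 2 → 1 ≤ t → t ≤ m ^ 2 → s ≠ t →
      interior (Δ s) ∩ interior (Δ t) = ∅) := by
  have hM : (1:ℝ) ≤ m := by exact_mod_cast hm
  have hM0 : (0:ℝ) < m := by linarith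
  constructor
  · intro t ht _
    have hcast : ((t - 1 : ℕ) : ℝ) = (t:ℝ) - 1 := by push_cast [ht]; ring
    rw [hb (t-1), hb t]
    simp only [hcast]
    have : ((t:ℝ) - 1) / m * ((m:ℝ) - t / m) -
        ((m:ℝ) - ((t:ℝ) - 1) / m) * ((t:ℝ) / m) = -1 := by
      field_simp
      ring
    rw [this]
    norm_num
  · intro s t hs _ ht _ hst
    rcases lt_or_gt_of_ne hst with h | h
    · exact key m hm b hb Δ hΔ s t hs h
    · rw [Set.inter_comm]
      exact key m hm b hb Δ hΔ t s ht h
end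

section
/- Let m ≥ 1 and let a₁, a₂ ∈ ℤ² be distinct lattice points with positive coordinates and ‖a₁‖₁, ‖a₂‖₁ < m, neither a scalar multiple of the other (i.e., not on a common ray from the origin). With b_t = (t/m, m − t/m) and Δ_t = conv{0, b_{t−1}, b_t}, the points a₁ and a₂ cannot lie in the same triangle Δ_t. (Consequently each bucket Δ_t contains at most one visible lattice vector of the first quadrant.) -/
lemma hull3_mem {p q A : ℝ × ℝ}
    (hA : A ∈ convexHull ℝ ({(0, 0), p, q} : Set (ℝ × ℝ))) :
    ∃ α β : ℝ, 0 ≤ α ∧ 0 ≤ β ∧ α + β ≤ 1 ∧ A = α • p + β • q := by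
  rw [show ({(0, 0), p, q} : Set (ℝ × ℝ)) = insert (0,0) {p,q} from rfl,
    convexHull_insert ⟨p, by simp⟩] at hA
  rw [mem_convexJoin] at hA
  obtain ⟨z, hz, w, hw, hAz⟩ := hA
  rw [Set.mem_singleton_iff] at hz; subst hz
  rw [convexHull_pair, segment_eq_image] at hw
  obtain ⟨c, ⟨hc0, hc1⟩, hceq⟩ := hw
  rw [segment_eq_image] at hAz
  obtain ⟨v, ⟨hv0, hv1⟩, hveq⟩ := hAz
  refine ⟨v * (1 - c), v * c, mul_nonneg hv0 (by linarith), mul_nonneg hv0 hc0, by nlinarith, ?_⟩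
  subst hceq; rw [← hveq]; simp only [Prod.mk_zero_zero, smul_zero]; module

/-- Two distinct lattice points of the open first quadrant with `ℓ¹` norm less
than `m`, not lying on a common ray through the origin, cannot lie in the same
bucket triangle `Δ_t = conv{0, b_{t−1}, b_t}`. -/
theorem buckets_contain_at_most_one (m : ℕ) (hm : 1 ≤ m) (a₁ a₂ : ℤ × ℤ)
    (hne : a₁ ≠ a₂)
    (h₁1 : 0 < a₁.1) (h₁2 : 0 < a₁.2) (h₂1 : 0 < a₂.1) (h₂2 : 0 < a₂.2)
    (hn₁ : a₁.1 + a₁.2 < m) (hn₂ : a₂.1 + a₂.2 < m)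
    (hray : a₁.1 * a₂.2 - a₁.2 * a₂.1 ≠ 0)
    (b : ℕ → ℝ × ℝ) (hb : ∀ t, b t = ((t : ℝ) / m, (m : ℝ) - t / m)) :
    ∀ t, 1 ≤ t → t ≤ m ^ 2 →
      ¬(((a₁.1 : ℝ), (a₁.2 : ℝ)) ∈
          convexHull ℝ ({(0, 0), b (t - 1), b t} : Set (ℝ × ℝ)) ∧
        ((a₂.1 : ℝ), (a₂.2 : ℝ)) ∈
          convexHull ℝ ({(0, 0), b (t - 1), b t} : Set (ℝ × ℝ))) := by
  rintro t ht - ⟨hA₁, hA₂⟩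
  have hM : (0:ℝ) < m := by exact_mod_cast hm
  have hbt : b t = ((t : ℝ) / m, (m : ℝ) - t / m) := hb t
  have hbt' : b (t-1) = (((t:ℝ) - 1) / m, (m : ℝ) - ((t:ℝ)-1) / m) := by
    rw [hb (t-1), Nat.cast_sub ht]; norm_num
  rw [hbt, hbt'] at hA₁ hA₂
  obtain ⟨α₁, β₁, hα₁, hβ₁, hs₁, he₁⟩ := hull3_mem hA₁
  obtain ⟨α₂, β₂, hα₂, hβ₂, hs₂, he₂⟩ := hull3_mem hA₂
  have e11 : (a₁.1 : ℝ) = α₁ * (((t:ℝ)-1)/m) + β₁ * ((t:ℝ)/m) := congrArg Prod.fst he₁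
  have e12 : (a₁.2 : ℝ) = α₁ * ((m:ℝ) - ((t:ℝ)-1)/m) + β₁ * ((m:ℝ) - (t:ℝ)/m) :=
    congrArg Prod.snd he₁
  have e21 : (a₂.1 : ℝ) = α₂ * (((t:ℝ)-1)/m) + β₂ * ((t:ℝ)/m) := congrArg Prod.fst he₂
  have e22 : (a₂.2 : ℝ) = α₂ * ((m:ℝ) - ((t:ℝ)-1)/m) + β₂ * ((m:ℝ) - (t:ℝ)/m) :=
    congrArg Prod.snd he₂
  -- sums are < 1
  have hsum₁ : α₁ + β₁ < 1 := by
    have h : (a₁.1 : ℝ) + (a₁.2 : ℝ) = (α₁ + β₁) * m := by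
      rw [e11, e12]; field_simp; ring
    have hlt : (a₁.1 : ℝ) + (a₁.2 : ℝ) < m := by exact_mod_cast hn₁
    nlinarith
  have hsum₂ : α₂ + β₂ < 1 := by
    have h : (a₂.1 : ℝ) + (a₂.2 : ℝ) = (α₂ + β₂) * m := by
      rw [e21, e22]; field_simp; ring
    have hlt : (a₂.1 : ℝ) + (a₂.2 : ℝ) < m := by exact_mod_cast hn₂
    nlinarith
  -- cross product identity
  have hcross : (a₁.1 : ℝ) * (a₂.2 : ℝ) - (a₁.2 : ℝ) * (a₂.1 : ℝ)
      = β₁ * α₂ - α₁ * β₂ := by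
    rw [e11, e12, e21, e22]; field_simp; ring
  have hD : ((a₁.1 * a₂.2 - a₁.2 * a₂.1 : ℤ) : ℝ) = β₁ * α₂ - α₁ * β₂ := by
    push_cast; exact hcross
  have habs : |((a₁.1 * a₂.2 - a₁.2 * a₂.1 : ℤ) : ℝ)| < 1 := by
    rw [hD, abs_lt]
    constructor <;> nlinarith
  have habs' : |a₁.1 * a₂.2 - a₁.2 * a₂.1| < 1 := by exact_mod_cast habs
  exact hray (abs_eq_zero.1 (le_antisymm (by omega) (abs_nonneg _)))
end

section
/- For n ≥ 2 even, define v_i = (1, i) for i = 1,…,n and v_{n+i} = (−1, −i) for i = 1,…,n; arrange these 2n vectors counterclockwise around the origin. Their total sum is 0, and the maximum absolute value of any coordinate of any partial sum (in counterclockwise order) is Θ(n²); specifically the y-extent of the resulting polygon equals 1 + 2 + ⋯ + n = n(n+1)/2. -/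
/-!
The first `n` vectors `(1, i + 1)` climb to the height `T n = 1 + 2 + ⋯ + n`, and the last `n`
vectors `(-1, -(j + 1))` retrace the same steps downwards, so after `n + j` steps the height is
`T n - T j`. Since `T` is monotone with `T 0 = 0`, every vertex has height in `[0, T n]`; the lowest
height is reached at the start and the highest after `n` steps, so the vertical extent is
`T n = n (n + 1) / 2`.
-/

open Finset

namespace Finset

variable {ι α : Type*} {s : Finset ι} {f : ι → α} {a : α} {j : ι}

theorem sup'_eq_of_mem_of_forall_le [SemilatticeSup α] (hs : s.Nonempty) (hj : j ∈ s)
    (hfj : f j = a) (hf : ∀ x ∈ s, f x ≤ a) : s.sup' hs f = a :=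
  le_antisymm (sup'_le hs f hf) (hfj ▸ le_sup' f hj)

theorem inf'_eq_of_mem_of_forall_le [SemilatticeInf α] (hs : s.Nonempty) (hj : j ∈ s)
    (hfj : f j = a) (hf : ∀ x ∈ s, a ≤ f x) : s.inf' hs f = a :=
  le_antisymm (hfj ▸ inf'_le f hj) (le_inf' hs f hf)

end Finset

namespace NaiveConstruction

def naiveVector (n i : ℕ) : ℤ × ℤ :=
  if i < n then ((1 : ℤ), (i : ℤ) + 1) else ((-1 : ℤ), -((i : ℤ) - n + 1))

def rise (i : ℕ) : ℤ × ℤ := (1, (i : ℤ) + 1)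

theorem two_mul_height_sum_rise (k : ℕ) : 2 * (∑ i ∈ range k, rise i).2 = k * (k + 1) := by
  induction k with
  | zero => simp
  | succ k ih =>
    rw [sum_range_succ, Prod.snd_add, mul_add, ih, rise]
    push_cast
    ring

theorem monotone_height_sum_rise : Monotone fun k => (∑ i ∈ range k, rise i).2 := by
  intro a b hab
  simp only [Prod.snd_sum, rise]
  exact sum_le_sum_of_subset_of_nonneg (range_mono hab) fun i _ _ => by positivity

theorem height_sum_rise_nonneg (k : ℕ) : 0 ≤ (∑ i ∈ range k, rise i).2 := by
  simpa using monotone_height_sum_rise (Nat.zero_le k)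

variable {n : ℕ} {v : ℕ → ℤ × ℤ}

theorem sum_range_eq_sum_rise (hv : ∀ i < 2 * n, v i = naiveVector n i) {k : ℕ} (hk : k ≤ n) :
    ∑ i ∈ range k, v i = ∑ i ∈ range k, rise i := by
  refine sum_congr rfl fun i hi => ?_
  have hin : i < n := (mem_range.mp hi).trans_le hk
  rw [hv i (by omega), naiveVector, if_pos hin, rise]

theorem sum_range_add_eq (hv : ∀ i < 2 * n, v i = naiveVector n i) {j : ℕ} (hj : j ≤ n) :
    ∑ i ∈ range (n + j), v i = ∑ i ∈ range n, rise i - ∑ i ∈ range j, rise i := by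
  have hdescent : ∀ i ∈ range j, v (n + i) = -rise i := fun i hi => by
    have hij : i < j := mem_range.mp hi
    rw [hv (n + i) (by omega), naiveVector, if_neg (by omega), rise, Prod.neg_mk, Prod.mk.injEq]
    exact ⟨rfl, by push_cast; ring⟩
  rw [sum_range_add, sum_range_eq_sum_rise hv le_rfl, sum_congr rfl hdescent, sum_neg_distrib,
    sub_eq_add_neg]

theorem sum_range_two_mul_eq_zero (hv : ∀ i < 2 * n, v i = naiveVector n i) :
    ∑ i ∈ range (2 * n), v i = 0 := by
  rw [two_mul, sum_range_add_eq hv le_rfl, sub_self]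

theorem height_mem_Icc (hv : ∀ i < 2 * n, v i = naiveVector n i) {k : ℕ} (hk : k ≤ 2 * n) :
    (∑ i ∈ range k, v i).2 ∈ Set.Icc 0 (∑ i ∈ range n, rise i).2 := by
  rcases le_or_gt k n with hkn | hnk
  · rw [sum_range_eq_sum_rise hv hkn]
    exact ⟨height_sum_rise_nonneg k, monotone_height_sum_rise hkn⟩
  · obtain ⟨j, rfl⟩ := Nat.exists_eq_add_of_le hnk.le
    rw [sum_range_add_eq hv (by omega), Prod.snd_sub]
    exact ⟨sub_nonneg.mpr (monotone_height_sum_rise (by omega)),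
      sub_le_self _ (height_sum_rise_nonneg j)⟩

end NaiveConstruction

open NaiveConstruction

/-- The naive construction: vectors `(1,1),…,(1,n),(−1,−1),…,(−1,−n)` sum to
zero, and the vertical extent of the polygon of partial sums equals
`1 + 2 + ⋯ + n = n(n+1)/2`, which is `Θ(n²)`. -/
theorem naive_construction_size (n : ℕ)
    (v : ℕ → ℤ × ℤ)
    (hv : ∀ i < 2 * n, v i = if i < n then ((1 : ℤ), (i : ℤ) + 1)
      else ((-1 : ℤ), -((i : ℤ) - n + 1))) :
    (∑ i ∈ Finset.range (2 * n), v i = 0) ∧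
    ((Finset.range (2 * n + 1)).sup'
        (by simp) (fun k => (∑ i ∈ Finset.range k, v i).2)
      - (Finset.range (2 * n + 1)).inf'
        (by simp) (fun k => (∑ i ∈ Finset.range k, v i).2)
      = (n * (n + 1) : ℤ) / 2) := by
  have hheight : ∀ k ∈ range (2 * n + 1),
      (∑ i ∈ range k, v i).2 ∈ Set.Icc 0 (∑ i ∈ range n, rise i).2 :=
    fun k hk => height_mem_Icc hv (Nat.lt_succ_iff.mp (mem_range.mp hk))
  refine ⟨sum_range_two_mul_eq_zero hv, ?_⟩
  rw [sup'_eq_of_mem_of_forall_le _ (mem_range.mpr (by omega : n < 2 * n + 1))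
      (congrArg Prod.snd (sum_range_eq_sum_rise hv le_rfl)) fun k hk => (hheight k hk).2,
    inf'_eq_of_mem_of_forall_le _ (mem_range.mpr (Nat.succ_pos _)) (by simp)
      fun k hk => (hheight k hk).1,
    sub_zero, ← two_mul_height_sum_rise n, Int.mul_ediv_cancel_left _ two_ne_zero]
end
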